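/- Let g be a nonempty list of positive natural numbers and let M be the additive submonoid of ℕ generated by the elements of g. Define mgen_g : ℕ → ℕ by mgen_g n = the sum over i in lgen_{|g|−1} n of g[i]. Then every element of M is in the range of mgen_g. -/

import Mathlib

/-!
`lgen m` runs an odometer through the nonincreasing lists with entries `≤ m`: `next m` raises
the head while it is below `m`, and otherwise advances the tail and copies its new head in front.
On such lists `next m` has an explicit inverse `prev m`, which strictly lowers the base-`(m + 2)`
number with digits `t[i] + 1`; descending along `prev m` therefore reaches `[]` = `lgen m 0`,
so every such list is some `lgen m n`. An element of the closure is a sum of entries of `g`, i.e.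
a sum `∑ g[i]` over a list of indices, and sorting that list nonincreasingly leaves the sum unchanged.
-/

def next (m : ℕ) : List ℕ → List ℕ
  | [] => [0]
  | h :: t =>
    if h < m then (h + 1) :: t
    else
      match next m t with
      | [] => []
      | x :: t' => x :: x :: t'

def lgen (m : ℕ) : ℕ → List ℕ
  | 0 => []
  | n + 1 => next m (lgen m n)

def mgen (g : List ℕ) (n : ℕ) : ℕ :=
  ((lgen (g.length - 1) n).map (fun i => g.getD i 0)).sum

def prev (m : ℕ) : List ℕ → List ℕ
  | [] => []
  | [h] => if h = 0 then [] else [h - 1]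
  | h :: y :: t => if y < h then (h - 1) :: y :: t else m :: prev m (y :: t)

section Prev

variable {m : ℕ} {t : List ℕ}

theorem prev_le (hb : ∀ a ∈ t, a ≤ m) : ∀ a ∈ prev m t, a ≤ m := by
  fun_induction prev m t with
  | case1 | case2 => simp
  | case3 h | case4 h => have := hb h List.mem_cons_self; grind
  | case5 h y t hyh ih => grind

theorem pairwise_prev (hs : t.Pairwise (· ≥ ·)) (hb : ∀ a ∈ t, a ≤ m) :
    (prev m t).Pairwise (· ≥ ·) := by
  fun_induction prev m t with
  | case1 | case2 | case3 => simp_all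
  | case4 h y t hyh => grind
  | case5 h y t hyh ih =>
    rw [List.pairwise_cons]
    exact ⟨prev_le (by grind), ih hs.of_cons (by grind)⟩

theorem next_prev (ht : t ≠ []) (hs : t.Pairwise (· ≥ ·)) (hb : ∀ a ∈ t, a ≤ m) :
    next m (prev m t) = t := by
  fun_induction prev m t with
  | case1 => contradiction
  | case2 => rfl
  | case3 h h0 | case4 h _ _ h0 =>
    have hm : h - 1 < m := by have := hb h List.mem_cons_self; omega
    rw [next, if_pos hm, Nat.sub_add_cancel (by omega)]
  | case5 h y t hyh ih =>
    have hhy : h = y := by grind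
    simp [next, ih (List.cons_ne_nil _ _) hs.of_cons (by grind), hhy]

theorem ofDigits_prev_lt (ht : t ≠ []) :
    Nat.ofDigits (m + 2) ((prev m t).map (· + 1)) < Nat.ofDigits (m + 2) (t.map (· + 1)) := by
  fun_induction prev m t with
  | case1 => contradiction
  | case2 => simp
  | case3 h h0 | case4 h _ _ h0 =>
    simp only [List.map_cons, Nat.ofDigits_cons]
    omega
  | case5 h y t hyh ih =>
    have := ih (List.cons_ne_nil _ _)
    simp only [List.map_cons, Nat.ofDigits_cons] at this ⊢
    nlinarith

theorem exists_lgen_eq (hs : t.Pairwise (· ≥ ·)) (hb : ∀ a ∈ t, a ≤ m) : ∃ n, lgen m n = t := by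
  induction hk : Nat.ofDigits (m + 2) (t.map (· + 1)) using Nat.strong_induction_on generalizing t with
  | _ k ih =>
  rcases eq_or_ne t [] with rfl | ht
  · exact ⟨0, rfl⟩
  obtain ⟨n, hn⟩ := ih _ (hk ▸ ofDigits_prev_lt ht) (pairwise_prev hs hb) (prev_le hb) rfl
  exact ⟨n + 1, by rw [lgen, hn, next_prev ht hs hb]⟩

end Prev

theorem exists_sum_getD_eq_of_mem_closure {M : Type*} [AddCommMonoid M] {g : List M} {x : M}
    (hx : x ∈ AddSubmonoid.closure {y | y ∈ g}) :
    ∃ l : List ℕ, (∀ i ∈ l, i < g.length) ∧ (l.map (g.getD · 0)).sum = x := by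
  classical
  obtain ⟨l, hl, rfl⟩ := AddSubmonoid.exists_list_of_mem_closure hx
  have hidx : ∀ y ∈ l, g.idxOf y < g.length := fun y hy => List.idxOf_lt_length_iff.mpr (hl y hy)
  refine ⟨l.map (g.idxOf ·), by simpa using hidx, ?_⟩
  rw [List.map_map]
  congr 1
  conv_rhs => rw [← List.map_id l]
  refine List.map_congr_left fun y hy => ?_
  simp only [Function.comp_apply, id_eq, List.getD_eq_getElem _ _ (hidx y hy), List.getElem_idxOf]

theorem stmt_16_general (g : List ℕ) (x : ℕ) (hx : x ∈ AddSubmonoid.closure {y : ℕ | y ∈ g}) :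
    ∃ n : ℕ, mgen g n = x := by
  obtain ⟨l, hl, rfl⟩ := exists_sum_getD_eq_of_mem_closure hx
  have hperm := l.perm_insertionSort (· ≥ ·)
  obtain ⟨n, hn⟩ := exists_lgen_eq (m := g.length - 1) (l.pairwise_insertionSort (· ≥ ·))
    fun i hi => by have := hl i (hperm.mem_iff.mp hi); omega
  exact ⟨n, by rw [mgen, hn, (hperm.map _).sum_eq]⟩

theorem stmt_16 (g : List ℕ) (hne : g ≠ []) (hpos : ∀ x ∈ g, 0 < x)
    (x : ℕ) (hx : x ∈ AddSubmonoid.closure {y : ℕ | y ∈ g}) :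
    ∃ n : ℕ, mgen g n = x :=
  stmt_16_general g x hx
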